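/- Let Q be a finite group and 0 → M → P → Λ → 0 a short exact sequence of Q-modules which splits as a sequence of abelian groups, where Λ is divisible with trivial Q-action. Then the induced sequence of coinvariants 0 → M_Q → P_Q → Λ_Q → 0 is exact on the left, i.e., M_Q → P_Q is injective. -/
import Mathlib


/-- The coinvariants subgroup: for a Q-module N, the subgroup of N generated by
the elements q • n − n. The coinvariants N_Q is the quotient N ⧸ (this subgroup). -/
def coinvariantsSubgroup (Q : Type*) [Group Q] (N : Type*) [AddCommGroup N]
    [DistribMulAction Q N] : AddSubgroup N :=
  AddSubgroup.closure {x : N | ∃ (q : Q) (n : N), x = q • n - n}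

/-- Let Q be a finite group and 0 → M → P → Λ → 0 a short exact sequence
of Q-modules which splits as a sequence of abelian groups, where Λ is divisible with
trivial Q-action. Then the induced sequence of coinvariants is exact on the left, i.e.
M_Q → P_Q is injective (any m whose image is a coinvariant-relation in P is already one
in M). -/
theorem stmt6 (Q M P Λ : Type*) [Group Q] [Finite Q]
    [AddCommGroup M] [AddCommGroup P] [AddCommGroup Λ]
    [DistribMulAction Q M] [DistribMulAction Q P] [DistribMulAction Q Λ]
    (f : M →+ P) (g : P →+ Λ)
    (hfQ : ∀ (q : Q) (m : M), f (q • m) = q • f m)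
    (hgQ : ∀ (q : Q) (p : P), g (q • p) = q • g p)
    (htriv : ∀ (q : Q) (x : Λ), q • x = x)
    (hf : Function.Injective f) (hg : Function.Surjective g)
    (hex : f.range = g.ker)
    (s : Λ →+ P) (hs : ∀ x : Λ, g (s x) = x)
    (hdiv : ∀ (x : Λ) (k : ℕ), 0 < k → ∃ y : Λ, (k : ℤ) • y = x) :
    ∀ m : M, f m ∈ coinvariantsSubgroup Q P → m ∈ coinvariantsSubgroup Q M := by
  classical
  cases nonempty_fintype Q
  set K := coinvariantsSubgroup Q M with hKdef
  have hgen : ∀ (q : Q) (m : M), q • m - m ∈ K := fun q m =>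
    AddSubgroup.subset_closure ⟨q, m, rfl⟩
  -- define t q l with f (t q l) = q • s l - s l
  have hker : ∀ (q : Q) (l : Λ), q • s l - s l ∈ f.range := by
    intro q l
    rw [hex, AddMonoidHom.mem_ker, map_sub, hgQ, hs, htriv, sub_self]
  choose t ht using hker
  have htzero : ∀ q : Q, t q 0 = 0 := by
    intro q; apply hf; rw [ht, map_zero, smul_zero, sub_self, map_zero]
  have htadd : ∀ (q : Q) (l l' : Λ), t q (l + l') = t q l + t q l' := by
    intro q l l'
    apply hf
    rw [map_add, ht, ht, ht, map_add, smul_add]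
    abel
  have htnsmul : ∀ (q : Q) (n : ℕ) (l : Λ), t q ((n : ℤ) • l) = (n : ℤ) • t q l := by
    intro q n l
    induction n with
    | zero => simpa using htzero q
    | succ k ih =>
        push_cast
        rw [add_smul, add_smul, one_smul, one_smul, htadd, ih]
  -- cocycle identity
  have hcoc : ∀ (q q' : Q) (l : Λ), t (q * q') l = t q l + q • t q' l := by
    intro q q' l
    apply hf
    rw [map_add, ht, ht, hfQ, ht, mul_smul, smul_sub]
    abel
  -- card Q • t q l ∈ K
  have hnt : ∀ (q : Q) (l : Λ), (Fintype.card Q : ℤ) • t q l ∈ K := by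
    intro q l
    have h1 : ∑ q' : Q, t (q * q') l = ∑ q' : Q, t q' l :=
      Fintype.sum_bijective (fun q' => q * q') (Group.mulLeft_bijective q) _ _
        (fun q' => rfl)
    have h2 : ∑ q' : Q, t (q * q') l
        = (Fintype.card Q : ℤ) • t q l + ∑ q' : Q, q • t q' l := by
      simp only [hcoc, Finset.sum_add_distrib, Finset.sum_const, Finset.card_univ]
      rw [← Nat.cast_smul_eq_nsmul ℤ]
    have h3 : (Fintype.card Q : ℤ) • t q l
        = -(∑ q' : Q, (q • t q' l - t q' l)) := by
      rw [Finset.sum_sub_distrib, ← h1, h2]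
      abel
    rw [h3]
    exact AddSubgroup.neg_mem _ (AddSubgroup.sum_mem _ fun q' _ => hgen q (t q' l))
  -- divisibility: t q l ∈ K
  have htK : ∀ (q : Q) (l : Λ), t q l ∈ K := by
    intro q l
    obtain ⟨l', hl'⟩ := hdiv l (Fintype.card Q) Fintype.card_pos
    rw [← hl', htnsmul]
    exact hnt q l'
  -- closure of P-generators lands in K.map f
  have hle : coinvariantsSubgroup Q P ≤ K.map f := by
    rw [coinvariantsSubgroup, AddSubgroup.closure_le]
    rintro x ⟨q, p, rfl⟩
    obtain ⟨mp, hmp⟩ : p - s (g p) ∈ f.range := by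
      rw [hex, AddMonoidHom.mem_ker, map_sub, hs, sub_self]
    refine ⟨q • mp - mp + t q (g p),
      AddSubgroup.add_mem _ (hgen q mp) (htK q (g p)), ?_⟩
    rw [map_add, map_sub, hfQ, hmp, ht, smul_sub]
    abel
  intro m hm
  obtain ⟨m', hm'K, hfm'⟩ := hle hm
  rwa [← hf hfm']
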